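/- arXiv:1712.08984 — 4 statements merged into one kernel-verified Lean document; each statement's English description precedes it below -/
import Mathlib

section
/- Let q be an odd prime power, ω a generator of F_{q²}^×, and χ a multiplicative character of F_{q²} with values in ℂ (extended by χ(0)=0) whose restriction to F_q^× equals the quadratic character η of F_q. Let ℓ be an integer not divisible by q+1. Then, as an identity in ℂ, ∑_{x∈F_q} χ(1 + ω^ℓ·x) = (χ(−1)·G_{q²}(χ)·G_q(η)/q) · χ(ω^{qℓ})^{−1} · χ(ω^{ℓq} − ω^{ℓ}). -/
noncomputable section

open Complex

open Classical in
/-- The quadratic character of a finite field, with values in `ℂ`. -/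
noncomputable def quadChar (F : Type*) [Field F] : F → ℂ :=
  fun x => if x = 0 then 0 else if IsSquare x then 1 else -1

/-!
Put `b = ω ^ ℓ`, so `b ^ q ≠ b` because `q + 1 ∤ ℓ`, and let `ψ' = ψ ∘ Tr`. Multiplying the sum by
`G(χ⁻¹)` and expanding `χ(z) G(χ⁻¹) = ∑_w χ⁻¹(w) ψ'(z w)`, the sum over `x ∈ F_q` of
`ψ(x Tr(b w))` keeps only the `w` with `Tr(b w) = 0`, i.e. the `F_q`-line through
`γ = (b ^ q - b) / b`. On that line `χ⁻¹` is `η` times `χ⁻¹(γ)`, so what remains is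
`q χ⁻¹(γ) η(Tr γ) G(η)`, and `Tr γ = (b ^ q - b) ^ 2 / b ^ (q + 1)`. Dividing by `G(χ⁻¹)` with
`G(χ) G(χ⁻¹) = χ(-1) q ^ 2` gives the formula.
-/

section GaussSum

variable {R R' : Type*} [Field R] [Fintype R] [CommRing R'] [IsDomain R']

theorem sum_mul_mulShift_eq_inv_mul_gaussSum {χ : MulChar R R'} (hχ : χ ≠ 1)
    (ψ : AddChar R R') (z : R) :
    ∑ w, χ w * ψ (z * w) = χ⁻¹ z * gaussSum χ ψ := by
  rcases eq_or_ne z 0 with rfl | hz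
  · simp [MulChar.sum_eq_zero_of_ne_one hχ, MulChar.map_zero χ⁻¹]
  · simpa [gaussSum] using gaussSum_mulShift_eq χ ψ (Units.mk0 z hz)

theorem gaussSum_mul_gaussSum_inv {χ : MulChar R R'} (hχ : χ ≠ 1) {ψ : AddChar R R'}
    (hψ : ψ.IsPrimitive) :
    gaussSum χ ψ * gaussSum χ⁻¹ ψ = χ (-1) * Fintype.card R := by
  rw [← mul_gaussSum_inv_eq_gaussSum χ⁻¹, mul_left_comm, gaussSum_mul_gaussSum_eq_card hχ hψ,
    MulChar.inv_apply', inv_neg_one]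

end GaussSum

theorem quadChar_eq_quadraticChar {F : Type*} [Field F] [Fintype F] [DecidableEq F] (x : F) :
    quadChar F x = quadraticChar F x := by
  rw [quadChar, quadraticChar_apply, quadraticCharFun]
  split_ifs <;> simp_all

theorem quadraticChar_ringHomComp_ne_one {F : Type*} [Field F] [Fintype F] [DecidableEq F]
    (hF : ringChar F ≠ 2) : (quadraticChar F).ringHomComp (Int.castRingHom ℂ) ≠ 1 := by
  obtain ⟨a, ha⟩ := quadraticChar_exists_neg_one' hF
  intro h
  have h' := congr($h a)
  norm_num [ha] at h'

theorem MulChar.ne_one_of_apply_algebraMap_eq {F K R' : Type*} [Field F] [Field K] [Algebra F K]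
    [CommRing R'] {η : MulChar F R'} (hη : η ≠ 1) {χ : MulChar K R'}
    (hχη : ∀ t, χ (algebraMap F K t) = η t) : χ ≠ 1 := by
  rintro rfl
  refine hη (MulChar.ext fun t ↦ ?_)
  rw [← hχη, MulChar.one_apply_coe, MulChar.one_apply (t.isUnit.map _)]

theorem AddChar.IsPrimitive.compLinearMap {F K R' : Type*} [Field F] [Field K] [Module F K]
    [CommRing R'] {ψ : AddChar F R'} (hψ : ψ.IsPrimitive) {L : K →ₗ[F] F} (hL : L ≠ 0) :
    (ψ.compAddMonoidHom L.toAddMonoidHom).IsPrimitive := by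
  refine AddChar.IsPrimitive.of_ne_one fun h ↦ hψ one_ne_zero ?_
  ext x
  obtain ⟨y, rfl⟩ := LinearMap.surjective hL x
  simpa using DFunLike.congr_fun h y

theorem sum_filter_eq_sum_smul {F K M : Type*} [Field F] [Fintype F] [AddCommGroup K]
    [Module F K] [Fintype K] [AddCommMonoid M] {p : K → Prop} [DecidablePred p]
    {γ : K} (hγ : γ ≠ 0) (hp : ∀ w, p w ↔ ∃ t : F, t • γ = w) (f : K → M) :
    ∑ w with p w, f w = ∑ t : F, f (t • γ) := by
  classical
  have hline : ({w | p w} : Finset K) = Finset.univ.image fun t : F ↦ t • γ := by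
    ext w
    simp [hp]
  rw [hline, Finset.sum_image fun s _ t _ h ↦ smul_left_injective F hγ h]

theorem zpow_pow_ne_self {G : Type*} [Group G] {ω : G} (hω : ∀ x, x ∈ Subgroup.zpowers ω)
    {q : ℕ} (hq : 1 < q) (hG : Nat.card G = q ^ 2 - 1) {ℓ : ℤ} (hℓ : ¬ (q + 1 : ℤ) ∣ ℓ) :
    (ω ^ ℓ) ^ q ≠ ω ^ ℓ := by
  intro h
  have hω1 : ω ^ (ℓ * (q - 1)) = 1 := by
    rw [mul_sub, mul_one, zpow_sub, zpow_mul, zpow_natCast, h, mul_inv_cancel]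
  have hdvd := orderOf_dvd_iff_zpow_eq_one.mpr hω1
  rw [orderOf_eq_card_of_forall_mem_zpowers hω, hG,
    Nat.cast_sub (Nat.one_le_pow _ _ (by omega))] at hdvd
  push_cast at hdvd
  refine hℓ <| (mul_dvd_mul_iff_right (by omega : (q - 1 : ℤ) ≠ 0)).mp ?_
  rwa [show ((q : ℤ) + 1) * (q - 1) = (q : ℤ) ^ 2 - 1 by ring]

theorem FiniteField.exists_algebraMap_eq_of_pow_card_eq {F K : Type*} [Field F] [Fintype F]
    [Field K] [Algebra F K] [Finite K] {x : K} (hx : x ^ Fintype.card F = x) :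
    ∃ t, algebraMap F K t = x := by
  refine (IsGalois.mem_range_algebraMap_iff_fixed x).mpr fun σ ↦ ?_
  obtain ⟨n, rfl⟩ := (bijective_frobeniusAlgEquivOfAlgebraic_pow F K).2 σ
  simp only [AlgEquiv.coe_pow, coe_frobeniusAlgEquivOfAlgebraic]
  exact Function.iterate_fixed hx n

section Trace

open FiniteField

variable {F K : Type*} [Field F] [Fintype F] [Field K] [Algebra F K]

local notation "q" => Fintype.card F

theorem isLinearMap_of_algebraMap_eq_add_pow {tr : K → F}
    (htr : ∀ x, algebraMap F K (tr x) = x + x ^ q) : IsLinearMap F tr where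
  map_add x y := (algebraMap F K).injective <| by
    simp only [map_add, htr, ← frobeniusAlgHom_apply F K]
    ring
  map_smul t x := (algebraMap F K).injective <| by
    simp only [htr, smul_eq_mul, map_mul, ← frobeniusAlgHom_apply F K, AlgHom.commutes,
      Algebra.smul_def]
    ring

theorem sub_pow_card_pow_card_eq_neg [Fintype K] (hK : Fintype.card K = q ^ 2) (b : K) :
    (b ^ q - b) ^ q = -(b ^ q - b) := by
  rw [← frobeniusAlgHom_apply F K, map_sub, frobeniusAlgHom_apply, frobeniusAlgHom_apply,
    ← pow_mul, ← sq, ← hK, pow_card, neg_sub]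

variable {L : K →ₗ[F] F} (hL : ∀ x, algebraMap F K (L x) = x + x ^ Fintype.card F)
include hL

theorem apply_eq_zero_iff_exists_smul_eq [Finite K] {θ : K} (hθ : θ ≠ 0) (hθq : θ ^ q = -θ)
    (y : K) : L y = 0 ↔ ∃ t : F, t • θ = y := by
  rw [← (algebraMap F K).injective.eq_iff, hL, map_zero, add_eq_zero_iff_eq_neg']
  constructor
  · intro hy
    obtain ⟨t, ht⟩ := exists_algebraMap_eq_of_pow_card_eq (F := F) (x := y / θ)
      (by rw [div_pow, hy, hθq, neg_div_neg_eq])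
    exact ⟨t, by rw [Algebra.smul_def, ht, div_mul_cancel₀ y hθ]⟩
  · rintro ⟨t, rfl⟩
    rw [← frobeniusAlgHom_apply F K, map_smul, frobeniusAlgHom_apply, hθq, smul_neg]

variable [Fintype K] (hK : Fintype.card K = Fintype.card F ^ 2)
include hK

theorem apply_mul_eq_zero_iff {b : K} (hb : b ^ q ≠ b) (w : K) :
    L (b * w) = 0 ↔ ∃ t : F, t • ((b ^ q - b) / b) = w := by
  have hb0 : b ≠ 0 := by rintro rfl; exact hb (zero_pow Fintype.card_ne_zero)
  rw [apply_eq_zero_iff_exists_smul_eq hL (sub_ne_zero.mpr hb) (sub_pow_card_pow_card_eq_neg hK b)]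
  simp only [← smul_div_assoc, div_eq_iff hb0, mul_comm w]

theorem algebraMap_apply_sub_div {b : K} (hb0 : b ≠ 0) :
    algebraMap F K (L ((b ^ q - b) / b)) = (b ^ q - b) ^ 2 / (b * b ^ q) := by
  have hbq : b ^ q ≠ 0 := pow_ne_zero _ hb0
  rw [hL, div_pow, sub_pow_card_pow_card_eq_neg hK]
  field_simp
  ring

end Trace

section CharacterSum

variable {F K R' : Type*} [Field F] [Fintype F] [Field K] [Algebra F K]

theorem sum_mulChar_one_add_mul_mul_gaussSum_inv_eq_sum_filter [Fintype K] [DecidableEq F]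
    [CommRing R'] [IsDomain R'] (L : K →ₗ[F] F) {ψ : AddChar F R'} (hψ : ψ.IsPrimitive)
    {χ : MulChar K R'} (hχ : χ ≠ 1) (b : K) :
    (∑ x : F, χ (1 + b * algebraMap F K x)) *
        gaussSum χ⁻¹ (ψ.compAddMonoidHom L.toAddMonoidHom) =
      Fintype.card F * ∑ w with L (b * w) = 0, χ⁻¹ w * ψ (L w) := by
  have hL (x : F) (w : K) : L ((1 + b * algebraMap F K x) * w) = L w + x * L (b * w) := by
    rw [← smul_eq_mul x, ← map_smul, ← map_add, Algebra.smul_def]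
    ring_nf
  calc _ = ∑ x : F, ∑ w, χ⁻¹ w * ψ (L ((1 + b * algebraMap F K x) * w)) := by
        rw [Finset.sum_mul]
        refine Finset.sum_congr rfl fun x _ ↦ ?_
        simpa using (sum_mul_mulShift_eq_inv_mul_gaussSum (inv_ne_one.mpr hχ)
          (ψ.compAddMonoidHom L.toAddMonoidHom) (1 + b * algebraMap F K x)).symm
    _ = ∑ w, χ⁻¹ w * ψ (L w) * ∑ x : F, ψ (x * L (b * w)) := by
        rw [Finset.sum_comm]
        simp only [hL, AddChar.map_add_eq_mul, Finset.mul_sum, mul_assoc]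
    _ = ∑ w, χ⁻¹ w * ψ (L w) * if L (b * w) = 0 then (Fintype.card F : R') else 0 := by
        simp only [AddChar.sum_mulShift _ hψ, Nat.cast_ite, Nat.cast_zero]
    _ = _ := by
        rw [Finset.mul_sum, Finset.sum_filter]
        refine Finset.sum_congr rfl fun w _ ↦ ?_
        split_ifs <;> simp [mul_comm]

theorem sum_mulChar_inv_smul_mul_addChar [CommRing R'] [IsDomain R'] {η : MulChar F R'}
    (hη : η.IsQuadratic) (hη1 : η ≠ 1) {χ : MulChar K R'}
    (hχη : ∀ t, χ (algebraMap F K t) = η t) (L : K →ₗ[F] F) (ψ : AddChar F R') (γ : K) :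
    ∑ t : F, χ⁻¹ (t • γ) * ψ (L (t • γ)) = χ⁻¹ γ * η (L γ) * gaussSum η ψ := by
  have hterm (t : F) : χ⁻¹ (t • γ) * ψ (L (t • γ)) = χ⁻¹ γ * (η t * ψ (L γ * t)) := by
    rw [map_smul L, smul_eq_mul, Algebra.smul_def, map_mul, MulChar.inv_apply' χ, ← map_inv₀, hχη,
      ← MulChar.inv_apply', hη.inv, mul_comm t]
    ring
  rw [Finset.sum_congr rfl fun t _ ↦ hterm t, ← Finset.mul_sum,
    sum_mul_mulShift_eq_inv_mul_gaussSum hη1, hη.inv, mul_assoc]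

variable [Fintype K] [Field R'] {L : K →ₗ[F] F}
  (hL : ∀ x, algebraMap F K (L x) = x + x ^ Fintype.card F)
  (hK : Fintype.card K = Fintype.card F ^ 2)

local notation "q" => Fintype.card F

include hL hK in
theorem sum_mulChar_one_add_mul_mul_gaussSum_inv_eq [DecidableEq F] {ψ : AddChar F R'}
    (hψ : ψ.IsPrimitive) {η : MulChar F R'} (hη : η.IsQuadratic) (hη1 : η ≠ 1)
    {χ : MulChar K R'} (hχη : ∀ t, χ (algebraMap F K t) = η t) {b : K} (hb : b ^ q ≠ b) :
    (∑ x : F, χ (1 + b * algebraMap F K x)) *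
        gaussSum χ⁻¹ (ψ.compAddMonoidHom L.toAddMonoidHom) =
      q * (χ (b ^ q - b) / χ (b ^ q) * gaussSum η ψ) := by
  have hb0 : b ≠ 0 := by rintro rfl; exact hb (zero_pow Fintype.card_ne_zero)
  have hθ : b ^ q - b ≠ 0 := sub_ne_zero.mpr hb
  have hχne {x : K} (hx : x ≠ 0) : χ x ≠ 0 := (hx.isUnit.map χ).ne_zero
  have hχinv (x : K) : χ x⁻¹ = (χ x)⁻¹ := by rw [← MulChar.inv_apply', MulChar.inv_apply_eq_inv']
  rw [sum_mulChar_one_add_mul_mul_gaussSum_inv_eq_sum_filter L hψ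
      (MulChar.ne_one_of_apply_algebraMap_eq hη1 hχη) b,
    sum_filter_eq_sum_smul (F := F) (div_ne_zero hθ hb0) (apply_mul_eq_zero_iff hL hK hb),
    sum_mulChar_inv_smul_mul_addChar hη hη1 hχη, ← hχη, algebraMap_apply_sub_div hL hK hb0]
  simp only [MulChar.inv_apply_eq_inv', div_eq_mul_inv, map_mul, map_pow, hχinv]
  field_simp [hχne hθ, hχne hb0, hχne (pow_ne_zero q hb0)]

include hL hK in
theorem sum_mulChar_one_add_mul_algebraMap [DecidableEq F] (hF : ringChar F ≠ 2)
    {ψ : AddChar F ℂ} (hψ : ψ.IsPrimitive) {χ : MulChar K ℂ}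
    (hχη : ∀ t, χ (algebraMap F K t) = quadraticChar F t) {b : K} (hb : b ^ q ≠ b) :
    ∑ x : F, χ (1 + b * algebraMap F K x) =
      χ (-1) * gaussSum χ (ψ.compAddMonoidHom L.toAddMonoidHom) *
        gaussSum ((quadraticChar F).ringHomComp (Int.castRingHom ℂ)) ψ / q *
        (χ (b ^ q))⁻¹ * χ (b ^ q - b) := by
  set η := (quadraticChar F).ringHomComp (Int.castRingHom ℂ)
  have hη1 : η ≠ 1 := quadraticChar_ringHomComp_ne_one hF
  have hχ := MulChar.ne_one_of_apply_algebraMap_eq hη1 hχη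
  have hL0 : L ≠ 0 := fun h ↦ Ring.two_ne_zero hF <| (algebraMap F K).injective <| by
    simpa [h, one_add_one_eq_two, eq_comm, map_ofNat] using hL 1
  have hGG := gaussSum_mul_gaussSum_inv hχ (hψ.compLinearMap hL0)
  rw [hK, Nat.cast_pow] at hGG
  have hsum := sum_mulChar_one_add_mul_mul_gaussSum_inv_eq hL hK hψ
    ((quadraticChar_isQuadratic F).comp _) hη1 hχη hb
  have hχ1 : χ (-1) ^ 2 = 1 := by rw [← map_pow, neg_one_sq, map_one]
  have hq : (q : ℂ) ≠ 0 := Nat.cast_ne_zero.mpr Fintype.card_ne_zero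
  have hG : gaussSum χ⁻¹ (ψ.compAddMonoidHom L.toAddMonoidHom) ≠ 0 := fun h ↦ by
    rw [h, mul_zero] at hGG
    exact mul_ne_zero (left_ne_zero_of_mul_eq_one ((sq _).symm.trans hχ1)) (pow_ne_zero 2 hq) hGG.symm
  have hb0 : b ≠ 0 := by rintro rfl; exact hb (zero_pow Fintype.card_ne_zero)
  have hbq : χ (b ^ q) ≠ 0 := ((pow_ne_zero q hb0).isUnit.map χ).ne_zero
  apply mul_right_cancel₀ hG
  rw [hsum]
  field_simp
  linear_combination (-(χ (b ^ q - b) * gaussSum η ψ * χ (-1))) * hGG -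
    (χ (b ^ q - b) * gaussSum η ψ * q ^ 2) * hχ1

end CharacterSum

theorem stmt_3_general (q : ℕ) (hqodd : Odd q)
    (F F2 : Type) [Field F] [Fintype F] [Field F2] [Fintype F2] [Algebra F F2]
    (hF : Fintype.card F = q) (hF2 : Fintype.card F2 = q ^ 2)
    (ω : F2ˣ) (hω : ∀ x : F2ˣ, x ∈ Subgroup.zpowers ω)
    (ψ : AddChar F ℂ) (hψ : ∃ a, ψ a ≠ 1)
    (tr : F2 → F) (htr : ∀ x : F2, algebraMap F F2 (tr x) = x + x ^ q)
    (χ : MulChar F2 ℂ)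
    (hχη : ∀ x : F, x ≠ 0 → χ (algebraMap F F2 x) = quadChar F x)
    (ℓ : ℤ) (hℓ : ¬ ((q : ℤ) + 1 ∣ ℓ)) :
    ∑ x : F, χ (1 + ((ω ^ ℓ : F2ˣ) : F2) * algebraMap F F2 x) =
      (χ (-1) * (∑ y : F2, χ y * ψ (tr y)) * (∑ x : F, quadChar F x * ψ x) / q) *
        (χ (((ω ^ ((q : ℤ) * ℓ) : F2ˣ) : F2)))⁻¹ *
        χ (((ω ^ (ℓ * (q : ℤ)) : F2ˣ) : F2) - ((ω ^ ℓ : F2ˣ) : F2)) := by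
  classical
  subst hF
  have hF : ringChar F ≠ 2 := by
    rw [Ne, FiniteField.even_card_iff_char_two, ← Nat.even_iff]
    exact Nat.not_even_iff_odd.mpr hqodd
  have hψ' : ψ.IsPrimitive := .of_ne_one fun h ↦ by
    obtain ⟨a, ha⟩ := hψ
    exact ha (h ▸ rfl)
  have hχη' (t : F) : χ (algebraMap F F2 t) = quadraticChar F t := by
    rcases eq_or_ne t 0 with rfl | ht
    · simp [MulChar.map_zero]
    · rw [hχη t ht, quadChar_eq_quadraticChar]
  have hb : ((ω ^ ℓ : F2ˣ) : F2) ^ Fintype.card F ≠ ((ω ^ ℓ : F2ˣ) : F2) := by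
    rw [← Units.val_pow_eq_pow_val]
    refine Units.val_injective.ne (zpow_pow_ne_self hω Fintype.one_lt_card ?_ hℓ)
    rw [Nat.card_eq_fintype_card, Fintype.card_units, hF2]
  rw [mul_comm _ ℓ, zpow_mul, zpow_natCast, Units.val_pow_eq_pow_val,
    sum_mulChar_one_add_mul_algebraMap (L := IsLinearMap.mk' tr
      (isLinearMap_of_algebraMap_eq_add_pow htr)) htr hF2 hF hψ' hχη' hb]
  simp [gaussSum, quadChar_eq_quadraticChar]

/-- evaluation of `∑_{x∈F_q} χ(1 + ω^ℓ x)` (Lemma 3.1 of the paper). -/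
theorem stmt_3 (q : ℕ) (hq : IsPrimePow q) (hqodd : Odd q)
    (F F2 : Type) [Field F] [Fintype F] [Field F2] [Fintype F2] [Algebra F F2]
    (hF : Fintype.card F = q) (hF2 : Fintype.card F2 = q ^ 2)
    (ω : F2ˣ) (hω : ∀ x : F2ˣ, x ∈ Subgroup.zpowers ω)
    (ψ : AddChar F ℂ) (hψ : ∃ a, ψ a ≠ 1)
    (tr : F2 → F) (htr : ∀ x : F2, algebraMap F F2 (tr x) = x + x ^ q)
    (χ : MulChar F2 ℂ)
    (hχη : ∀ x : F, x ≠ 0 → χ (algebraMap F F2 x) = quadChar F x)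
    (ℓ : ℤ) (hℓ : ¬ ((q : ℤ) + 1 ∣ ℓ)) :
    ∑ x : F, χ (1 + ((ω ^ ℓ : F2ˣ) : F2) * algebraMap F F2 x) =
      (χ (-1) * (∑ y : F2, χ y * ψ (tr y)) * (∑ x : F, quadChar F x * ψ x) / q) *
        (χ (((ω ^ ((q : ℤ) * ℓ) : F2ˣ) : F2)))⁻¹ *
        χ (((ω ^ (ℓ * (q : ℤ)) : F2ˣ) : F2) - ((ω ^ ℓ : F2ˣ) : F2)) :=
  stmt_3_general q hqodd F F2 hF hF2 ω hω ψ hψ tr htr χ hχη ℓ hℓ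
end
end

section
/- Let m be a positive integer such that q = 4m² + 4m + 3 is a prime power, and let C := C_0^{(2,q)} be the set of nonzero squares of F_q. Suppose D ⊆ F_q satisfies |D| = 2m² + m + 2 and, for every a ∈ F_q, |D ∩ ((C∪{0}) + a)| ∈ {m²+1, m²+2, m²+m+1, m²+m+2}. Then there exists an Hadamard matrix of order n = 4(m² + m + 1) each of whose row sums equals either 2m − 2 or 2m + 2. -/
/-!
Paley's first construction: for `q ≡ 3 (mod 4)` the Jacobsthal matrix `Q = (χ(y - x))` of the
quadratic character satisfies `Qᵀ = -Q`, `Q 𝟙 = 0` and `Q Qᵀ = q I - J` (the last one is a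
Jacobi sum computation), so bordering `I + Q` by a row of `1`s and a column of `-1`s gives a
Hadamard matrix of order `q + 1 = 4(m² + m + 1)`. Negating the columns indexed by `∞` (the
`Unit` coordinate) and by `D`, and then every row with negative sum, keeps it Hadamard. The row
sums become `|q - 1 - 2|D||` at `∞` and `|2 + 2|D| - 4|D ∩ (x + squares)||` at `x`, and the
four admissible intersection sizes make these `2m - 2` or `2m + 2`.
-/

open Finset Matrix

section CharacterSums

variable {F : Type*} [Field F] [Fintype F] [DecidableEq F]

theorem sum_quadraticChar_mul_self :
    ∑ x : F, quadraticChar F x * quadraticChar F x = Fintype.card F - 1 := by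
  have hsq (x : F) : quadraticChar F x * quadraticChar F x = 1 - if x = 0 then 1 else 0 := by
    by_cases hx : x = 0
    · rw [hx, quadraticChar_zero]; simp
    · rw [← pow_two, quadraticChar_sq_one hx, if_neg hx, sub_zero]
  simp only [hsq, sum_sub_distrib, sum_ite_eq', mem_univ, if_true, sum_const, card_univ,
    nsmul_eq_mul, mul_one]

theorem sum_quadraticChar_mul_quadraticChar_add (hF : ringChar F ≠ 2) {a : F} (ha : a ≠ 0) :
    ∑ x : F, quadraticChar F x * quadraticChar F (x + a) = -1 := by
  have hJ : jacobiSum (quadraticChar F) (quadraticChar F) = -quadraticChar F (-1) := by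
    simpa only [(quadraticChar_isQuadratic F).inv] using
      jacobiSum_nontrivial_inv (quadraticChar_ne_one hF)
  -- substituting `x = -a * y` turns the sum into `χ(-1) χ(a)² J(χ, χ)`
  calc ∑ x : F, quadraticChar F x * quadraticChar F (x + a)
      = ∑ y : F, quadraticChar F (-a * y) * quadraticChar F (-a * y + a) :=
        (Fintype.sum_bijective _ (mulLeft_bijective₀ (-a) (neg_ne_zero.mpr ha)) _ _
          fun _ => rfl).symm
    _ = quadraticChar F (-1) * quadraticChar F a ^ 2 *
          jacobiSum (quadraticChar F) (quadraticChar F) := by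
        rw [jacobiSum, mul_sum]
        refine sum_congr rfl fun y _ => ?_
        rw [show -a * y + a = a * (1 - y) by ring, show -a * y = -1 * a * y by ring]
        simp only [map_mul]
        ring
    _ = -1 := by
        rw [hJ, quadraticChar_sq_one ha]
        linear_combination -quadraticChar_sq_one (neg_ne_zero.mpr (one_ne_zero (α := F)))

end CharacterSums

section Paley

variable {F : Type*} [Field F] [Fintype F] [DecidableEq F]

variable (F) in
def jacobsthalMatrix : Matrix F F ℤ := of fun x y => quadraticChar F (y - x)

theorem one_add_jacobsthalMatrix_apply (x y : F) :
    (1 + jacobsthalMatrix F) x y = if IsSquare (y - x) then 1 else -1 := by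
  by_cases h : x = y
  · simp [h, jacobsthalMatrix]
  · simp [jacobsthalMatrix, one_apply_ne h, quadraticChar_apply, quadraticCharFun,
      sub_eq_zero, Ne.symm h]

theorem jacobsthalMatrix_transpose (hF : Fintype.card F % 4 = 3) :
    (jacobsthalMatrix F)ᵀ = -jacobsthalMatrix F := by
  have hneg : quadraticChar F (-1) = -1 :=
    quadraticChar_neg_one_iff_not_isSquare.mpr (by simp [FiniteField.isSquare_neg_one_iff, hF])
  ext x y
  rw [transpose_apply, neg_apply, jacobsthalMatrix, of_apply, of_apply,
    ← neg_sub, neg_eq_neg_one_mul, map_mul, hneg, neg_one_mul]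

theorem jacobsthalMatrix_mulVec_one (hF : ringChar F ≠ 2) : jacobsthalMatrix F *ᵥ 1 = 0 := by
  ext x
  simp only [mulVec, dotProduct, jacobsthalMatrix, of_apply, Pi.one_apply, mul_one,
    Pi.zero_apply]
  rw [← quadraticChar_sum_zero hF]
  exact Fintype.sum_equiv (Equiv.subRight x) _ _ fun _ => rfl

theorem sum_one_add_jacobsthalMatrix_apply (hF : ringChar F ≠ 2) (x : F) :
    ∑ y, (1 + jacobsthalMatrix F) x y = 1 := by
  have h : (1 + jacobsthalMatrix F) *ᵥ 1 = 1 := by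
    rw [add_mulVec, one_mulVec, jacobsthalMatrix_mulVec_one hF, add_zero]
  simpa only [mulVec, dotProduct, Pi.one_apply, mul_one] using congrFun h x

theorem jacobsthalMatrix_mul_transpose (hF : ringChar F ≠ 2) :
    jacobsthalMatrix F * (jacobsthalMatrix F)ᵀ =
      (Fintype.card F : ℤ) • 1 - of fun _ _ => 1 := by
  ext x x'
  have hshift : (jacobsthalMatrix F * (jacobsthalMatrix F)ᵀ) x x' =
      ∑ z, quadraticChar F z * quadraticChar F (z + (x - x')) :=
    Fintype.sum_equiv (Equiv.subRight x) _ _ fun y => by simp [jacobsthalMatrix]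
  rw [hshift, Matrix.sub_apply, Matrix.smul_apply, of_apply, one_apply]
  by_cases h : x = x'
  · rw [h, sub_self, if_pos rfl]
    simp only [add_zero, sum_quadraticChar_mul_self, smul_eq_mul, mul_one]
  · rw [sum_quadraticChar_mul_quadraticChar_add hF (sub_ne_zero.mpr h), if_neg h]
    simp

omit [DecidableEq F] in
theorem ringChar_ne_two_of_card_mod_four_eq_three (hF : Fintype.card F % 4 = 3) :
    ringChar F ≠ 2 :=
  mt FiniteField.even_card_iff_char_two.mp (by omega)

variable (F) in
def paleyMatrix : Matrix (Unit ⊕ F) (Unit ⊕ F) ℤ :=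
  fromBlocks 1 (of fun _ _ => 1) (of fun _ _ => -1) (1 + jacobsthalMatrix F)

theorem paleyMatrix_mul_transpose (hF : Fintype.card F % 4 = 3) :
    paleyMatrix F * (paleyMatrix F)ᵀ = ((Fintype.card F : ℤ) + 1) • 1 := by
  have hchar := ringChar_ne_two_of_card_mod_four_eq_three hF
  rw [paleyMatrix, fromBlocks_transpose, fromBlocks_multiply, ← fromBlocks_one, fromBlocks_smul,
    smul_zero]
  congr 1
  · ext
    simp [mul_apply, add_comm]
  · ext _ x
    rw [Matrix.add_apply]
    simp only [mul_apply, transpose_apply, of_apply, one_mul,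
      sum_one_add_jacobsthalMatrix_apply hchar]
    simp
  · ext x _
    rw [Matrix.add_apply]
    simp only [mul_apply, transpose_apply, of_apply, mul_one,
      sum_one_add_jacobsthalMatrix_apply hchar]
    simp
  · have hJ : (of fun _ _ => -1 : Matrix F Unit ℤ) * (of fun _ _ => -1 : Matrix F Unit ℤ)ᵀ =
        of fun _ _ => 1 := by
      ext; simp [mul_apply]
    rw [hJ, transpose_add, transpose_one, mul_add, add_mul, add_mul,
      jacobsthalMatrix_mul_transpose hchar, jacobsthalMatrix_transpose hF, add_smul, one_smul]
    simp only [Matrix.mul_one, Matrix.one_mul, Matrix.mul_neg]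
    abel

theorem paleyMatrix_apply_mem_unitary (i j : Unit ⊕ F) : paleyMatrix F i j ∈ unitary ℤ := by
  rw [Unitary.mem_iff_eq_one_or_eq_neg_one]
  rcases i with _ | x <;> rcases j with _ | y
  · simp [paleyMatrix]
  · simp [paleyMatrix]
  · simp [paleyMatrix]
  · rw [paleyMatrix, fromBlocks_apply₂₂, one_add_jacobsthalMatrix_apply]
    split_ifs <;> simp

theorem isHadamard_paleyMatrix (hF : Fintype.card F % 4 = 3) : (paleyMatrix F).IsHadamard := by
  refine .of_mul_conjTranspose paleyMatrix_apply_mem_unitary ?_ (.of_ne_zero ?_)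
  · rw [conjTranspose_eq_transpose_of_trivial, paleyMatrix_mul_transpose hF]
    simp [add_comm]
  · rw [Fintype.card_sum, Fintype.card_unit]
    omega

end Paley

section SignChange

variable {n : Type*} [Fintype n] [DecidableEq n]

theorem Matrix.IsHadamard.diagonal_mul_mul_diagonal {R : Type*} [CommRing R] [StarRing R]
    {A : Matrix n n R} (hA : A.IsHadamard) {s t : n → R} (hs : ∀ i, s i ∈ unitary R)
    (ht : ∀ j, t j ∈ unitary R) : (diagonal s * A * diagonal t).IsHadamard := by
  have hunit {u : n → R} (hu : ∀ i, u i ∈ unitary R) :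
      diagonal u * (diagonal u)ᴴ = 1 ∧ (diagonal u)ᴴ * diagonal u = 1 := by
    simp only [diagonal_conjTranspose, diagonal_mul_diagonal, Pi.star_apply,
      Unitary.mul_star_self_of_mem (hu _), Unitary.star_mul_self_of_mem (hu _)]
    exact ⟨diagonal_one, diagonal_one⟩
  refine ⟨fun i j => ?_, ?_, ?_⟩
  · simpa [diagonal_mul, mul_diagonal] using mul_mem (mul_mem (hs i) (hA.apply_mem i j)) (ht j)
  · calc diagonal s * A * diagonal t * (diagonal s * A * diagonal t)ᴴ
        = diagonal s * (A * (diagonal t * (diagonal t)ᴴ) * Aᴴ) * (diagonal s)ᴴ := by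
          simp only [Matrix.conjTranspose_mul, Matrix.mul_assoc]
      _ = (Fintype.card n : R) • 1 := by
          rw [(hunit ht).1, Matrix.mul_one, hA.mul_conjTranspose, Matrix.mul_smul,
            Matrix.smul_mul, Matrix.mul_one, (hunit hs).1]
  · calc (diagonal s * A * diagonal t)ᴴ * (diagonal s * A * diagonal t)
        = (diagonal t)ᴴ * (Aᴴ * ((diagonal s)ᴴ * diagonal s) * A) * diagonal t := by
          simp only [Matrix.conjTranspose_mul, Matrix.mul_assoc]
      _ = (Fintype.card n : R) • 1 := by
          rw [(hunit hs).2, Matrix.mul_one, hA.conjTranspose_mul, Matrix.mul_smul,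
            Matrix.smul_mul, Matrix.mul_one, (hunit ht).2]

theorem sum_diagonal_mul_mul_diagonal_apply {R : Type*} [CommSemiring R] (s t : n → R)
    (A : Matrix n n R) (i : n) :
    ∑ j, (diagonal s * A * diagonal t) i j = s i * (A *ᵥ t) i := by
  simp [diagonal_mul, mul_diagonal, mulVec, dotProduct, mul_sum, mul_assoc]

theorem Matrix.IsHadamard.exists_fin_rowSum_eq_abs {A : Matrix n n ℤ} (hA : A.IsHadamard)
    {t : n → ℤ} (ht : ∀ j, t j ∈ unitary ℤ) {N : ℕ} (hN : Fintype.card n = N) :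
    ∃ H : Matrix (Fin N) (Fin N) ℤ, H.IsHadamard ∧
      ∀ i, ∃ k, ∑ j, H i j = |(A *ᵥ t) k| := by
  set s : n → ℤ := fun k => if 0 ≤ (A *ᵥ t) k then 1 else -1
  have hs (k : n) : s k ∈ unitary ℤ := by
    rw [Unitary.mem_iff_eq_one_or_eq_neg_one]
    by_cases h : 0 ≤ (A *ᵥ t) k <;> simp [s, h]
  have hsign (k : n) : s k * (A *ᵥ t) k = |(A *ᵥ t) k| := by
    by_cases h : 0 ≤ (A *ᵥ t) k
    · simp [s, h, abs_of_nonneg h]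
    · simp [s, h, abs_of_neg (not_le.mp h)]
  let e := Fintype.equivFinOfCardEq hN
  refine ⟨Matrix.reindex e e (diagonal s * A * diagonal t),
    (hA.diagonal_mul_mul_diagonal hs ht).reindex e e, fun i => ⟨e.symm i, ?_⟩⟩
  rw [← hsign, ← sum_diagonal_mul_mul_diagonal_apply]
  exact e.symm.sum_comp (fun j => (diagonal s * A * diagonal t) (e.symm i) j)

end SignChange

section RowSums

variable {α : Type*}

theorem sum_ite_mem_eq_ncard [Fintype α] (s : Set α) [DecidablePred (· ∈ s)] :
    ∑ y, (if y ∈ s then (1 : ℤ) else 0) = s.ncard := by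
  rw [Finset.sum_boole, Set.ncard_eq_toFinset_card']
  congr
  ext
  simp

def columnSign (D : Set α) [DecidablePred (· ∈ D)] : Unit ⊕ α → ℤ :=
  Sum.elim (fun _ => -1) fun y => if y ∈ D then -1 else 1

theorem columnSign_mem_unitary (D : Set α) [DecidablePred (· ∈ D)] (j : Unit ⊕ α) :
    columnSign D j ∈ unitary ℤ := by
  rw [Unitary.mem_iff_eq_one_or_eq_neg_one]
  rcases j with _ | y
  · simp [columnSign]
  · by_cases h : y ∈ D <;> simp [columnSign, h]

variable {F : Type*} [Field F] [Fintype F] [DecidableEq F]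

theorem paleyMatrix_mulVec_columnSign_inl (D : Set F) [DecidablePred (· ∈ D)] :
    (paleyMatrix F *ᵥ columnSign D) (.inl ()) = Fintype.card F - 1 - 2 * D.ncard := by
  have h (y : F) : (if y ∈ D then -1 else 1 : ℤ) = 1 - 2 * if y ∈ D then 1 else 0 := by
    split_ifs <;> norm_num
  simp only [mulVec, dotProduct, Fintype.sum_sum_type, paleyMatrix, columnSign,
    fromBlocks_apply₁₁, fromBlocks_apply₁₂, of_apply, Sum.elim_inl, Sum.elim_inr, one_mul,
    h, sum_sub_distrib, ← mul_sum, sum_ite_mem_eq_ncard, univ_unique, PUnit.default_eq_unit,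
    one_apply_eq, mul_neg, mul_one, sum_neg_distrib, sum_const, card_singleton,
    Int.nsmul_eq_mul, Nat.cast_one, card_univ]
  ring

theorem paleyMatrix_mulVec_columnSign_inr (hF : ringChar F ≠ 2) (D : Set F)
    [DecidablePred (· ∈ D)] (x : F) :
    (paleyMatrix F *ᵥ columnSign D) (.inr x) =
      2 + 2 * D.ncard - 4 * (D ∩ {y | IsSquare (y - x)}).ncard := by
  classical
  have h (y : F) : (1 + jacobsthalMatrix F) x y * (if y ∈ D then -1 else 1) =
      (1 + jacobsthalMatrix F) x y + 2 * (if y ∈ D then 1 else 0) -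
        4 * if y ∈ D ∩ {y | IsSquare (y - x)} then 1 else 0 := by
    rw [one_add_jacobsthalMatrix_apply]
    by_cases hD : y ∈ D <;> by_cases hS : IsSquare (y - x) <;> simp [hD, hS]
  simp only [mulVec, dotProduct, Fintype.sum_sum_type, paleyMatrix, columnSign,
    fromBlocks_apply₂₁, fromBlocks_apply₂₂, of_apply, Sum.elim_inl, Sum.elim_inr, h,
    sum_sub_distrib, sum_add_distrib, ← mul_sum, sum_ite_mem_eq_ncard,
    sum_one_add_jacobsthalMatrix_apply hF, univ_unique, PUnit.default_eq_unit, sum_const,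
    card_singleton, Int.nsmul_eq_mul, Nat.cast_one, mul_one, mul_neg, neg_neg]
  ring

end RowSums

theorem abs_eq_two_mul_sub_two_or_add_two {m : ℕ} {r : ℤ}
    (hr : r = 2 * m - 2 ∨ r = 2 * m + 2 ∨ r = -(2 * m - 2) ∨ r = -(2 * m + 2)) :
    |r| = 2 * m - 2 ∨ |r| = 2 * m + 2 := by
  rcases abs_cases r with ⟨habs, hsign⟩ | ⟨habs, hsign⟩ <;> omega

theorem stmt_9_general (m : ℕ)
    (F : Type) [Field F] [Fintype F] (hF : Fintype.card F = 4 * m ^ 2 + 4 * m + 3)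
    (C : Set F) (hC : C = {x : F | x ≠ 0 ∧ IsSquare x})
    (D : Set F) (hD : D.ncard = 2 * m ^ 2 + m + 2)
    (hint : ∀ a : F,
      (D ∩ ((fun x => x + a) '' (C ∪ {0}))).ncard ∈
        ({m ^ 2 + 1, m ^ 2 + 2, m ^ 2 + m + 1, m ^ 2 + m + 2} : Set ℕ)) :
    ∃ H : Matrix (Fin (4 * (m ^ 2 + m + 1))) (Fin (4 * (m ^ 2 + m + 1))) ℤ,
      (∀ i j, H i j = 1 ∨ H i j = -1) ∧
      H * H.transpose = ((4 * (m ^ 2 + m + 1) : ℕ) : ℤ) • (1 : Matrix _ _ ℤ) ∧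
      (∀ i, (∑ j, H i j) = 2 * (m : ℤ) - 2 ∨ (∑ j, H i j) = 2 * (m : ℤ) + 2) := by
  classical
  have hq : Fintype.card F % 4 = 3 := by omega
  have hsq (a : F) : (fun x => x + a) '' (C ∪ {0}) = {y | IsSquare (y - a)} := by
    ext y
    by_cases hy : y - a = 0 <;> simp [hC, Set.image_add_right, ← sub_eq_add_neg, hy]
  have hrowSum (k : Unit ⊕ F) : |(paleyMatrix F *ᵥ columnSign D) k| = 2 * (m : ℤ) - 2 ∨
      |(paleyMatrix F *ᵥ columnSign D) k| = 2 * (m : ℤ) + 2 := by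
    refine abs_eq_two_mul_sub_two_or_add_two ?_
    rcases k with _ | x
    · rw [paleyMatrix_mulVec_columnSign_inl, hF, hD]
      push_cast
      omega
    · rw [paleyMatrix_mulVec_columnSign_inr (ringChar_ne_two_of_card_mod_four_eq_three hq), hD]
      have hx := hint x
      simp only [hsq, Set.mem_insert_iff, Set.mem_singleton_iff] at hx
      rcases hx with hx | hx | hx | hx <;> rw [hx] <;> push_cast <;> omega
  obtain ⟨H, hH, hsum⟩ := (isHadamard_paleyMatrix hq).exists_fin_rowSum_eq_abs
    (columnSign_mem_unitary D) (N := 4 * (m ^ 2 + m + 1))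
    (by rw [Fintype.card_sum, Fintype.card_unit, hF]; ring)
  refine ⟨H, fun i j => Unitary.mem_iff_eq_one_or_eq_neg_one.mp (hH.apply_mem i j), ?_,
    fun i => ?_⟩
  · simpa [conjTranspose_eq_transpose_of_trivial] using hH.mul_conjTranspose
  · obtain ⟨k, hk⟩ := hsum i
    exact hk ▸ hrowSum k

/-- A four-intersection set with parameters
`(2m²+m+2; {m²+1, m²+2, m²+m+1, m²+m+2})` for the translates of `C ∪ {0}` (with `C` the
nonzero squares of `F_q`, `q = 4m²+4m+3`) yields a biregular Hadamard matrix of order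
`4(m²+m+1)` with row sums `2m−2` or `2m+2`. -/
theorem stmt_9 (m : ℕ) (hm : 0 < m)
    (F : Type) [Field F] [Fintype F] (hF : Fintype.card F = 4 * m ^ 2 + 4 * m + 3)
    (C : Set F) (hC : C = {x : F | x ≠ 0 ∧ IsSquare x})
    (D : Set F) (hD : D.ncard = 2 * m ^ 2 + m + 2)
    (hint : ∀ a : F,
      (D ∩ ((fun x => x + a) '' (C ∪ {0}))).ncard ∈
        ({m ^ 2 + 1, m ^ 2 + 2, m ^ 2 + m + 1, m ^ 2 + m + 2} : Set ℕ)) :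
    ∃ H : Matrix (Fin (4 * (m ^ 2 + m + 1))) (Fin (4 * (m ^ 2 + m + 1))) ℤ,
      (∀ i j, H i j = 1 ∨ H i j = -1) ∧
      H * H.transpose = ((4 * (m ^ 2 + m + 1) : ℕ) : ℤ) • (1 : Matrix _ _ ℤ) ∧
      (∀ i, (∑ j, H i j) = 2 * (m : ℤ) - 2 ∨ (∑ j, H i j) = 2 * (m : ℤ) + 2) :=
  stmt_9_general m F hF C hC D hD hint
end

section
/- Let q be an odd prime power and ω a generator of F_{q²}^×. For each i ∈ {0, 1}, the set { x ∈ C_1^{(2,q²)} : Tr_{F_{q²}/F_q}(x·ω^{(q+1)/2}) ∈ C_i^{(2,q)} } has exactly (q² − 1)/4 elements. -/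
/-!
Put `c = ω^((q+1)/2)`. Since `ω` is a nonsquare, `c^(q-1) = ω^((q²-1)/2) = -1`, so `c^q = -c`.
Hence `Tr(xc) = c (x - x^q)` vanishes only for `x ∈ F_q`, and every element of `F_q^×` is a square
in `F_{q²}`; so the trace never vanishes on nonsquares. Multiplying by a nonsquare `v ∈ F_q`, which
is a square in `F_{q²}`, permutes the nonsquares of `F_{q²}` and scales the trace by `v`, so it
swaps the two sets. They therefore split the `(q²-1)/2` nonsquares evenly.
-/

theorem Nat.two_mul_add_one_sq_div_two (k : ℕ) : (2 * k + 1) ^ 2 / 2 = 2 * k * (k + 1) := by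
  rw [show (2 * k + 1) ^ 2 = 2 * (2 * k * (k + 1)) + 1 by ring]
  omega

namespace FiniteField

variable {K : Type*} [Field K] [Fintype K]

theorem ringChar_ne_two_of_odd_card (h : Odd (Fintype.card K)) : ringChar K ≠ 2 := fun hc ↦ by
  have := even_card_iff_char_two.mp hc
  rw [Nat.odd_iff] at h
  omega

theorem isSquare_mul_iff (hK : ringChar K ≠ 2) {a b : K} (ha : a ≠ 0) (hb : b ≠ 0) :
    IsSquare (a * b) ↔ (IsSquare a ↔ IsSquare b) := by
  rw [isSquare_iff hK (mul_ne_zero ha hb), isSquare_iff hK ha, isSquare_iff hK hb, mul_pow]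
  have hne : (-1 : K) ≠ 1 := Ring.neg_one_ne_one_of_char_ne_two hK
  rcases pow_dichotomy hK ha with h | h <;> rcases pow_dichotomy hK hb with h' | h' <;>
    simp [h, h', hne]

theorem pow_card_div_two_of_not_isSquare (hK : ringChar K ≠ 2) {a : K} (ha : ¬IsSquare a) :
    a ^ (Fintype.card K / 2) = -1 := by
  have ha0 : a ≠ 0 := by rintro rfl; exact ha .zero
  exact (pow_dichotomy hK ha0).resolve_left fun h ↦ ha ((isSquare_iff hK ha0).mpr h)

theorem not_isSquare_of_forall_mem_zpowers (hK : ringChar K ≠ 2) {ω : Kˣ}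
    (hω : ∀ x : Kˣ, x ∈ Subgroup.zpowers ω) : ¬IsSquare (ω : K) := by
  rw [isSquare_iff hK ω.ne_zero]
  intro h
  have hord : orderOf ω = Fintype.card K - 1 := by
    rw [orderOf_eq_card_of_forall_mem_zpowers hω, Nat.card_units, Nat.card_eq_fintype_card]
  have hodd := odd_card_of_char_ne_two hK
  have htwo : 1 < Fintype.card K := Fintype.one_lt_card
  have hle := orderOf_le_of_pow_eq_one (by omega) (Units.ext (by simpa using h) :
    ω ^ (Fintype.card K / 2) = 1)
  omega

theorem ncard_nonsquares (hK : ringChar K ≠ 2) :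
    {x : K | x ≠ 0 ∧ ¬IsSquare x}.ncard = (Fintype.card K - 1) / 2 := by
  obtain ⟨a, ha⟩ := exists_nonsquare hK
  have ha0 : a ≠ 0 := by rintro rfl; exact ha .zero
  have hswap : {x : K | x ≠ 0 ∧ IsSquare x}.ncard = {x : K | x ≠ 0 ∧ ¬IsSquare x}.ncard := by
    refine le_antisymm (Set.ncard_le_ncard_of_injOn (a * ·) ?_ (mul_right_injective₀ ha0).injOn)
      (Set.ncard_le_ncard_of_injOn (a * ·) ?_ (mul_right_injective₀ ha0).injOn)
    all_goals
      rintro x ⟨hx0, hx⟩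
      refine ⟨mul_ne_zero ha0 hx0, ?_⟩
      rw [isSquare_mul_iff hK ha0 hx0]
      tauto
  have hsplit := Set.ncard_inter_add_ncard_sdiff_eq_ncard ({0}ᶜ : Set K) {x | IsSquare x}
  rw [Set.ncard_compl, Set.ncard_singleton, Nat.card_eq_fintype_card] at hsplit
  change {x : K | x ≠ 0 ∧ IsSquare x}.ncard + {x : K | x ≠ 0 ∧ ¬IsSquare x}.ncard = _ at hsplit
  omega

end FiniteField

section QuadraticExtension

variable {K : Type*} [Field K] [Fintype K] {q : ℕ}

theorem isSquare_of_pow_eq_self (hK : Fintype.card K = q ^ 2) (hq : Odd q) {x : K} (hx0 : x ≠ 0)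
    (hx : x ^ q = x) : IsSquare x := by
  have hchar := FiniteField.ringChar_ne_two_of_odd_card (hK ▸ hq.pow)
  obtain ⟨k, rfl⟩ := hq
  have hx1 : x ^ (2 * k) = 1 := mul_right_cancel₀ hx0 (by rw [← pow_succ, hx, one_mul])
  rw [FiniteField.isSquare_iff hchar hx0, hK, Nat.two_mul_add_one_sq_div_two, pow_mul, hx1, one_pow]

theorem pow_pow_half_succ_eq_neg (hK : Fintype.card K = q ^ 2) (hq : Odd q) {ω : K}
    (hω : ¬IsSquare ω) : (ω ^ ((q + 1) / 2)) ^ q = -ω ^ ((q + 1) / 2) := by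
  have hneg := FiniteField.pow_card_div_two_of_not_isSquare
    (FiniteField.ringChar_ne_two_of_odd_card (hK ▸ hq.pow)) hω
  obtain ⟨k, rfl⟩ := hq
  have hexp : (2 * k + 1 + 1) / 2 = k + 1 := by omega
  rw [hK, Nat.two_mul_add_one_sq_div_two] at hneg
  rw [hexp, ← pow_mul, show (k + 1) * (2 * k + 1) = 2 * k * (k + 1) + (k + 1) by ring, pow_add,
    hneg, neg_one_mul]

end QuadraticExtension

section Trace

variable {F K : Type*} [Field F] [Field K] [Algebra F K] {q : ℕ} {tr : K → F}

theorem trace_algebraMap_mul [Fintype F] (hF : Fintype.card F = q)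
    (htr : ∀ x : K, algebraMap F K (tr x) = x + x ^ q) (v : F) (z : K) :
    tr (algebraMap F K v * z) = v * tr z := by
  apply (algebraMap F K).injective
  have hv : algebraMap F K v ^ q = algebraMap F K v := by
    rw [← map_pow, ← hF, FiniteField.pow_card]
  rw [htr, map_mul, htr, mul_pow, hv]
  ring

theorem pow_eq_self_of_trace_mul_eq_zero (htr : ∀ x : K, algebraMap F K (tr x) = x + x ^ q)
    {c x : K} (hc0 : c ≠ 0) (hc : c ^ q = -c) (h : tr (x * c) = 0) : x ^ q = x := by
  have h0 := htr (x * c)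
  rw [h, map_zero, mul_pow, hc] at h0
  exact mul_left_cancel₀ hc0 (by linear_combination h0)

end Trace

theorem ncard_nonsquares_fiber_eq {F K : Type*} [Field F] [Fintype F] [Field K] [Fintype K]
    [Algebra F K] (hF : ringChar F ≠ 2) (hFK : ∀ y : F, y ≠ 0 → IsSquare (algebraMap F K y))
    (f : K → F) (hf : ∀ v x, f (algebraMap F K v * x) = v * f x)
    (hf0 : ∀ x, x ≠ 0 → ¬IsSquare x → f x ≠ 0) :
    {x : K | (x ≠ 0 ∧ ¬IsSquare x) ∧ f x ≠ 0 ∧ IsSquare (f x)}.ncard = (Fintype.card K - 1) / 4 ∧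
    {x : K | (x ≠ 0 ∧ ¬IsSquare x) ∧ f x ≠ 0 ∧ ¬IsSquare (f x)}.ncard =
      (Fintype.card K - 1) / 4 := by
  have hK : ringChar K ≠ 2 := Algebra.ringChar_eq F K ▸ hF
  obtain ⟨v, hv⟩ := FiniteField.exists_nonsquare hF
  have hv0 : v ≠ 0 := by rintro rfl; exact hv .zero
  set V := algebraMap F K v
  have hV0 : V ≠ 0 := (map_ne_zero _).mpr hv0
  have hswap : ∀ x : K, x ≠ 0 ∧ ¬IsSquare x → f x ≠ 0 →
      (V * x ≠ 0 ∧ ¬IsSquare (V * x)) ∧ f (V * x) ≠ 0 ∧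
        (IsSquare (f (V * x)) ↔ ¬IsSquare (f x)) := by
    rintro x ⟨hx0, hx⟩ hfx
    rw [hf, FiniteField.isSquare_mul_iff hK hV0 hx0, FiniteField.isSquare_mul_iff hF hv0 hfx]
    exact ⟨⟨mul_ne_zero hV0 hx0, by tauto⟩, mul_ne_zero hv0 hfx, by tauto⟩
  set A := {x : K | (x ≠ 0 ∧ ¬IsSquare x) ∧ f x ≠ 0 ∧ IsSquare (f x)}
  set B := {x : K | (x ≠ 0 ∧ ¬IsSquare x) ∧ f x ≠ 0 ∧ ¬IsSquare (f x)}
  have hAB : A.ncard = B.ncard := by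
    refine le_antisymm (Set.ncard_le_ncard_of_injOn (V * ·) ?_ (mul_right_injective₀ hV0).injOn)
      (Set.ncard_le_ncard_of_injOn (V * ·) ?_ (mul_right_injective₀ hV0).injOn)
    all_goals
      rintro x ⟨hx, hfx, hsq⟩
      obtain ⟨hVx, hfVx, hiff⟩ := hswap x hx hfx
      exact ⟨hVx, hfVx, by tauto⟩
  have hunion : A ∪ B = {x : K | x ≠ 0 ∧ ¬IsSquare x} := by
    ext x
    have := hf0 x
    simp only [A, B, Set.mem_union, Set.mem_ofPred_eq]
    tauto
  have hdisj : Disjoint A B := Set.disjoint_left.mpr fun _ hA hB ↦ hB.2.2 hA.2.2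
  have hsplit := Set.ncard_union_eq hdisj
  rw [hunion, FiniteField.ncard_nonsquares hK] at hsplit
  omega

theorem stmt_11_general (q : ℕ) (hqodd : Odd q)
    (F F2 : Type) [Field F] [Fintype F] [Field F2] [Fintype F2] [Algebra F F2]
    (hF : Fintype.card F = q) (hF2 : Fintype.card F2 = q ^ 2)
    (ω : F2ˣ) (hω : ∀ x : F2ˣ, x ∈ Subgroup.zpowers ω)
    (tr : F2 → F) (htr : ∀ x : F2, algebraMap F F2 (tr x) = x + x ^ q) :
    ({x : F2 | (x ≠ 0 ∧ ¬ IsSquare x) ∧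
        (tr (x * ((ω ^ ((q + 1) / 2) : F2ˣ) : F2)) ≠ 0 ∧
          IsSquare (tr (x * ((ω ^ ((q + 1) / 2) : F2ˣ) : F2))))}).ncard = (q ^ 2 - 1) / 4 ∧
    ({x : F2 | (x ≠ 0 ∧ ¬ IsSquare x) ∧
        (tr (x * ((ω ^ ((q + 1) / 2) : F2ˣ) : F2)) ≠ 0 ∧
          ¬ IsSquare (tr (x * ((ω ^ ((q + 1) / 2) : F2ˣ) : F2))))}).ncard = (q ^ 2 - 1) / 4 := by
  have hF2char := FiniteField.ringChar_ne_two_of_odd_card (hF2 ▸ hqodd.pow)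
  set c : F2 := ((ω ^ ((q + 1) / 2) : F2ˣ) : F2)
  have hc : c ^ q = -c := by
    simpa only [c, Units.val_pow_eq_pow_val] using pow_pow_half_succ_eq_neg hF2 hqodd
      (FiniteField.not_isSquare_of_forall_mem_zpowers hF2char hω)
  have hFsq : ∀ y : F, y ≠ 0 → IsSquare (algebraMap F F2 y) := fun y hy ↦
    isSquare_of_pow_eq_self hF2 hqodd ((map_ne_zero _).mpr hy)
      (by rw [← map_pow, ← hF, FiniteField.pow_card])
  rw [← hF2]
  refine ncard_nonsquares_fiber_eq (FiniteField.ringChar_ne_two_of_odd_card (hF ▸ hqodd)) hFsq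
    (fun x ↦ tr (x * c)) (fun v x ↦ by rw [mul_assoc, trace_algebraMap_mul hF htr]) ?_
  intro x hx0 hx htrx
  exact hx (isSquare_of_pow_eq_self hF2 hqodd hx0
    (pow_eq_self_of_trace_mul_eq_zero htr (Units.ne_zero _) hc htrx))

/-- for each `i ∈ {0,1}`, the set
`{x ∈ C_1^{(2,q²)} : Tr_{F_{q²}/F_q}(x·ω^{(q+1)/2}) ∈ C_i^{(2,q)}}` has exactly
`(q² − 1)/4` elements (Remark 4.3 of the paper). -/
theorem stmt_11 (q : ℕ) (hq : IsPrimePow q) (hqodd : Odd q)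
    (F F2 : Type) [Field F] [Fintype F] [Field F2] [Fintype F2] [Algebra F F2]
    (hF : Fintype.card F = q) (hF2 : Fintype.card F2 = q ^ 2)
    (ω : F2ˣ) (hω : ∀ x : F2ˣ, x ∈ Subgroup.zpowers ω)
    (tr : F2 → F) (htr : ∀ x : F2, algebraMap F F2 (tr x) = x + x ^ q) :
    ({x : F2 | (x ≠ 0 ∧ ¬ IsSquare x) ∧
        (tr (x * ((ω ^ ((q + 1) / 2) : F2ˣ) : F2)) ≠ 0 ∧
          IsSquare (tr (x * ((ω ^ ((q + 1) / 2) : F2ˣ) : F2))))}).ncard = (q ^ 2 - 1) / 4 ∧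
    ({x : F2 | (x ≠ 0 ∧ ¬ IsSquare x) ∧
        (tr (x * ((ω ^ ((q + 1) / 2) : F2ˣ) : F2)) ≠ 0 ∧
          ¬ IsSquare (tr (x * ((ω ^ ((q + 1) / 2) : F2ˣ) : F2))))}).ncard = (q ^ 2 - 1) / 4 :=
  stmt_11_general q hqodd F F2 hF hF2 ω hω tr htr
end

section
/- Let q be an odd prime power, ω a generator of F_{q²}^×, and t an integer such that ω^t ∉ F_q. Then for each i ∈ {0, 1}, the set { x ∈ ω^t·F_q^× : Tr_{F_{q²}/F_q}(x·ω^{(q+1)/2}) ∈ C_i^{(2,q)} } has exactly (q − 1)/2 elements. -/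
/-!
Write `a = ω^t` and `b = ω^((q+1)/2)`. Since `ω^((q²-1)/2) = -1`, we get `b^q = -b`, so for
`y ∈ F_q` the trace is linear along the line: `Tr(a y b) = y · c` with `c = Tr(a b) = b (a - a^q)`,
and `c ≠ 0` because `a ∉ F_q`. Hence `y ↦ Tr(a y b)` is a bijection of `F_q^×`, and the two sets
have as many elements as there are nonzero squares, resp. nonsquares, in `F_q`, namely `(q-1)/2`
each: multiplication by a fixed nonsquare exchanges them.
-/

theorem Set.ncard_setOf_mul_right {G : Type*} [GroupWithZero G] {c : G} (hc : c ≠ 0)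
    (P : G → Prop) : {y | P (y * c)}.ncard = {z | P z}.ncard :=
  Set.ncard_preimage_of_injective_subset_range (mul_left_injective₀ hc)
    fun z _ => ⟨z * c⁻¹, by simp [hc]⟩

namespace FiniteField

variable {K : Type*} [Field K] [Fintype K]

open Polynomial in
theorem mem_range_algebraMap_of_pow_card_eq {L : Type*} [Field L] [Algebra K L] {x : L}
    (hx : x ^ Fintype.card K = x) : x ∈ Set.range (algebraMap K L) := by
  have hroots : (X ^ Fintype.card K - X : K[X]).roots.map (algebraMap K L) =
      (X ^ Fintype.card K - X : L[X]).roots := by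
    have := roots_map_of_injective_of_card_eq_natDegree (algebraMap K L).injective
      (p := X ^ Fintype.card K - X) (by
        rw [roots_X_pow_card_sub_X, X_pow_card_sub_X_natDegree_eq K Fintype.one_lt_card]
        rfl)
    rwa [Polynomial.map_sub, Polynomial.map_pow, map_X] at this
  have hx' : x ∈ (X ^ Fintype.card K - X : L[X]).roots := by
    rw [mem_roots (X_pow_card_sub_X_ne_zero L Fintype.one_lt_card)]
    simp [hx]
  rw [← hroots, Multiset.mem_map] at hx'
  obtain ⟨y, -, hy⟩ := hx'
  exact ⟨y, hy⟩

theorem isSquare_mul_iff_not_isSquare {u z : K} (hu : ¬IsSquare u)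
    (hz : z ≠ 0) : IsSquare (u * z) ↔ ¬IsSquare z := by
  classical
  have hu0 : u ≠ 0 := by rintro rfl; exact hu IsSquare.zero
  rw [← quadraticChar_one_iff_isSquare (mul_ne_zero hu0 hz),
    ← quadraticChar_neg_one_iff_not_isSquare, map_mul,
    quadraticChar_neg_one_iff_not_isSquare.mpr hu]
  constructor <;> intro h <;> linarith

theorem val_pow_card_div_two_of_forall_mem_zpowers (hK : ringChar K ≠ 2) {g : Kˣ}
    (hg : ∀ x : Kˣ, x ∈ Subgroup.zpowers g) : (g : K) ^ (Fintype.card K / 2) = -1 := by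
  have hodd := odd_card_of_char_ne_two hK
  have hcard : 2 < Fintype.card K := by
    have := Fintype.one_lt_card (α := K); omega
  have hord : orderOf g = Fintype.card K - 1 := by
    rw [orderOf_eq_card_of_forall_mem_zpowers hg, Nat.card_units, Nat.card_eq_fintype_card]
  have hne : g ^ (Fintype.card K / 2) ≠ 1 :=
    pow_ne_one_of_lt_orderOf (by omega) (by omega)
  refine (pow_dichotomy hK g.ne_zero).resolve_left fun h => hne (Units.ext ?_)
  simpa using h

theorem ncard_isSquare_and_ncard_not_isSquare (hK : ringChar K ≠ 2) :
    {z : K | z ≠ 0 ∧ IsSquare z}.ncard = (Fintype.card K - 1) / 2 ∧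
    {z : K | z ≠ 0 ∧ ¬IsSquare z}.ncard = (Fintype.card K - 1) / 2 := by
  obtain ⟨u, hu⟩ := exists_nonsquare hK
  have hu0 : u ≠ 0 := by rintro rfl; exact hu IsSquare.zero
  have hswap : {z : K | z ≠ 0 ∧ ¬IsSquare z}.ncard = {z : K | z ≠ 0 ∧ IsSquare z}.ncard := by
    rw [← Set.ncard_setOf_mul_right hu0 fun z => z ≠ 0 ∧ ¬IsSquare z]
    congr 1
    ext z
    by_cases hz : z = 0
    · simp [hz]
    · simp only [Set.mem_ofPred_eq, mul_comm z u, ne_eq, mul_eq_zero, hu0, hz, or_self,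
        not_false_eq_true, true_and, isSquare_mul_iff_not_isSquare hu hz, not_not]
  have hsum := Set.ncard_inter_add_ncard_sdiff_eq_ncard {z : K | z ≠ 0} {z | IsSquare z}
  have hne : ({0}ᶜ : Set K).ncard = Fintype.card K - 1 := by
    simpa using Set.ncard_compl ({0} : Set K)
  have hodd := odd_card_of_char_ne_two hK
  change {z : K | z ≠ 0 ∧ IsSquare z}.ncard + {z : K | z ≠ 0 ∧ ¬IsSquare z}.ncard =
    ({0}ᶜ : Set K).ncard at hsum
  omega

theorem val_pow_succ_div_two_pow_eq_neg {L : Type*} [Field L] [Fintype L] {q : ℕ}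
    (hq : Odd q) (hL : Fintype.card L = q ^ 2) {ω : Lˣ}
    (hω : ∀ x : Lˣ, x ∈ Subgroup.zpowers ω) :
    ((ω ^ ((q + 1) / 2) : Lˣ) : L) ^ q = -((ω ^ ((q + 1) / 2) : Lˣ) : L) := by
  have hchar : ringChar L ≠ 2 := ringChar_ne_two_of_odd_card (hL ▸ hq.pow)
  have hexp : (q + 1) / 2 * (q - 1) = Fintype.card L / 2 := by
    obtain ⟨k, rfl⟩ := hq
    rw [hL, show (2 * k + 1) ^ 2 = 2 * (2 * k ^ 2 + 2 * k) + 1 by ring,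
      show (2 * k + 1 + 1) / 2 = k + 1 by omega, show 2 * k + 1 - 1 = 2 * k by omega,
      Nat.mul_add_div two_pos]
    ring
  set b := ((ω ^ ((q + 1) / 2) : Lˣ) : L)
  calc b ^ q = b ^ (q - 1) * b := by rw [← pow_succ, Nat.sub_add_cancel hq.pos]
    _ = (ω : L) ^ (Fintype.card L / 2) * b := by
      rw [← Units.val_pow_eq_pow_val, ← pow_mul, hexp, Units.val_pow_eq_pow_val]
    _ = -b := by rw [val_pow_card_div_two_of_forall_mem_zpowers hchar hω, neg_one_mul]

end FiniteField

section Trace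

variable {K L : Type*} [Field K] [Fintype K] [Field L] [Algebra K L] {tr : L → K}
  (htr : ∀ x : L, algebraMap K L (tr x) = x + x ^ Fintype.card K)
include htr

theorem trace_algebraMap_mul_s19 (y : K) (x : L) : tr (algebraMap K L y * x) = y * tr x :=
  (algebraMap K L).injective <| by
    rw [map_mul, htr, htr, mul_pow, ← map_pow, FiniteField.pow_card]
    ring

theorem trace_mul_ne_zero {a b : L} (hb : b ≠ 0) (hbq : b ^ Fintype.card K = -b)
    (haq : a ^ Fintype.card K ≠ a) : tr (a * b) ≠ 0 := by
  have hval : algebraMap K L (tr (a * b)) = b * (a - a ^ Fintype.card K) := by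
    rw [htr, mul_pow, hbq]
    ring
  intro h
  rw [h, map_zero, eq_comm, mul_eq_zero, sub_eq_zero] at hval
  exact haq (hval.resolve_left hb).symm

end Trace

theorem ncard_setOf_mul_algebraMap_eq {K L : Type*} [Field K] [Field L] [Algebra K L]
    {f : L → K} {a : L} (ha : a ≠ 0) {c : K} (hc : c ≠ 0)
    (hf : ∀ y : K, f (a * algebraMap K L y) = y * c) {P : K → Prop} (hP : ∀ z, P z → z ≠ 0) :
    {x : L | (∃ y : K, y ≠ 0 ∧ x = a * algebraMap K L y) ∧ P (f x)}.ncard = {z | P z}.ncard := by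
  have hline : {x : L | (∃ y : K, y ≠ 0 ∧ x = a * algebraMap K L y) ∧ P (f x)} =
      (fun y => a * algebraMap K L y) '' {y | P (y * c)} := by
    ext x
    constructor
    · rintro ⟨⟨y, -, rfl⟩, hx⟩
      exact ⟨y, show P (y * c) by rwa [← hf], rfl⟩
    · rintro ⟨y, hy, rfl⟩
      exact ⟨⟨y, left_ne_zero_of_mul (hP _ hy), rfl⟩, by rwa [hf]⟩
  rw [hline, Set.ncard_image_of_injective _
    fun y y' h => (algebraMap K L).injective (mul_left_cancel₀ ha h), Set.ncard_setOf_mul_right hc]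

theorem stmt_19_general (q : ℕ) (hqodd : Odd q)
    (F F2 : Type) [Field F] [Fintype F] [Field F2] [Fintype F2] [Algebra F F2]
    (hF : Fintype.card F = q) (hF2 : Fintype.card F2 = q ^ 2)
    (ω : F2ˣ) (hω : ∀ x : F2ˣ, x ∈ Subgroup.zpowers ω)
    (tr : F2 → F) (htr : ∀ x : F2, algebraMap F F2 (tr x) = x + x ^ q)
    (t : ℤ) (ht : ((ω ^ t : F2ˣ) : F2) ∉ Set.range (algebraMap F F2)) :
    ({x : F2 | (∃ y : F, y ≠ 0 ∧ x = ((ω ^ t : F2ˣ) : F2) * algebraMap F F2 y) ∧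
        (tr (x * ((ω ^ ((q + 1) / 2) : F2ˣ) : F2)) ≠ 0 ∧
          IsSquare (tr (x * ((ω ^ ((q + 1) / 2) : F2ˣ) : F2))))}).ncard = (q - 1) / 2 ∧
    ({x : F2 | (∃ y : F, y ≠ 0 ∧ x = ((ω ^ t : F2ˣ) : F2) * algebraMap F F2 y) ∧
        (tr (x * ((ω ^ ((q + 1) / 2) : F2ˣ) : F2)) ≠ 0 ∧
          ¬ IsSquare (tr (x * ((ω ^ ((q + 1) / 2) : F2ˣ) : F2))))}).ncard = (q - 1) / 2 := by
  subst hF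
  set a := ((ω ^ t : F2ˣ) : F2)
  set b := ((ω ^ ((Fintype.card F + 1) / 2) : F2ˣ) : F2)
  have hbq : b ^ Fintype.card F = -b := FiniteField.val_pow_succ_div_two_pow_eq_neg hqodd hF2 hω
  have haq : a ^ Fintype.card F ≠ a :=
    fun h => ht (FiniteField.mem_range_algebraMap_of_pow_card_eq h)
  have hc : tr (a * b) ≠ 0 := trace_mul_ne_zero htr (Units.ne_zero _) hbq haq
  have hline : ∀ y : F, tr (a * algebraMap F F2 y * b) = y * tr (a * b) := fun y => by
    rw [show a * algebraMap F F2 y * b = algebraMap F F2 y * (a * b) by ring,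
      trace_algebraMap_mul_s19 htr]
  obtain ⟨hsq, hnsq⟩ := FiniteField.ncard_isSquare_and_ncard_not_isSquare
    (FiniteField.ringChar_ne_two_of_odd_card hqodd)
  exact ⟨(ncard_setOf_mul_algebraMap_eq (Units.ne_zero _) hc hline fun _ h => h.1).trans hsq,
    (ncard_setOf_mul_algebraMap_eq (Units.ne_zero _) hc hline fun _ h => h.1).trans hnsq⟩

/-- for `ω^t ∉ F_q` and each `i ∈ {0,1}`, the set
`{x ∈ ω^t·F_q^× : Tr_{F_{q²}/F_q}(x·ω^{(q+1)/2}) ∈ C_i^{(2,q)}}` has exactly `(q−1)/2`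
elements (Remark 6.5 of the paper). -/
theorem stmt_19 (q : ℕ) (hq : IsPrimePow q) (hqodd : Odd q)
    (F F2 : Type) [Field F] [Fintype F] [Field F2] [Fintype F2] [Algebra F F2]
    (hF : Fintype.card F = q) (hF2 : Fintype.card F2 = q ^ 2)
    (ω : F2ˣ) (hω : ∀ x : F2ˣ, x ∈ Subgroup.zpowers ω)
    (tr : F2 → F) (htr : ∀ x : F2, algebraMap F F2 (tr x) = x + x ^ q)
    (t : ℤ) (ht : ((ω ^ t : F2ˣ) : F2) ∉ Set.range (algebraMap F F2)) :
    ({x : F2 | (∃ y : F, y ≠ 0 ∧ x = ((ω ^ t : F2ˣ) : F2) * algebraMap F F2 y) ∧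
        (tr (x * ((ω ^ ((q + 1) / 2) : F2ˣ) : F2)) ≠ 0 ∧
          IsSquare (tr (x * ((ω ^ ((q + 1) / 2) : F2ˣ) : F2))))}).ncard = (q - 1) / 2 ∧
    ({x : F2 | (∃ y : F, y ≠ 0 ∧ x = ((ω ^ t : F2ˣ) : F2) * algebraMap F F2 y) ∧
        (tr (x * ((ω ^ ((q + 1) / 2) : F2ˣ) : F2)) ≠ 0 ∧
          ¬ IsSquare (tr (x * ((ω ^ ((q + 1) / 2) : F2ˣ) : F2))))}).ncard = (q - 1) / 2 :=
  stmt_19_general q hqodd F F2 hF hF2 ω hω tr htr t ht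
end
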